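/- arXiv:1105.4121 — 2 statements merged into one kernel-verified Lean document; each statement's English description precedes it below -/
import Mathlib

section
/- Let R ⊆ S be a ring extension with S = R·C_S(R) (a centralizing extension), where C_S(R) is the centralizer of R in S. Then for every prime ideal P of S, the contraction P ∩ R is a prime ideal of R. -/
open Pointwise

/-- A two-sided ideal of a (possibly noncommutative) ring, as a subset. -/
structure IsTwoSidedIdealSet (R : Type*) [Ring R] (I : Set R) : Prop where
  zero_mem : (0 : R) ∈ I
  add_mem : ∀ ⦃a b : R⦄, a ∈ I → b ∈ I → a + b ∈ I
  neg_mem : ∀ ⦃a : R⦄, a ∈ I → -a ∈ I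
  mul_mem_left : ∀ (r : R) ⦃a : R⦄, a ∈ I → r * a ∈ I
  mul_mem_right : ∀ (r : R) ⦃a : R⦄, a ∈ I → a * r ∈ I

/-- A prime two-sided ideal of `S`. -/
def IsPrimeTI (S : Type*) [Ring S] (P : Set S) : Prop :=
  IsTwoSidedIdealSet S P ∧ P ≠ Set.univ ∧
    ∀ A B : Set S, IsTwoSidedIdealSet S A → IsTwoSidedIdealSet S B →
      (∀ a ∈ A, ∀ b ∈ B, a * b ∈ P) → A ⊆ P ∨ B ⊆ P

/-- A two-sided ideal of the subring `R'` of `S`, realized as a subset of `S`. -/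
def IsTIof {S : Type*} [Ring S] (R' : Subring S) (I : Set S) : Prop :=
  I ⊆ (R' : Set S) ∧ (0 : S) ∈ I ∧ (∀ a ∈ I, ∀ b ∈ I, a + b ∈ I) ∧ (∀ a ∈ I, -a ∈ I) ∧
    ∀ r ∈ R', ∀ a ∈ I, r * a ∈ I ∧ a * r ∈ I

/-- A prime two-sided ideal of the subring `R'` of `S`. -/
def IsPrimeTIof {S : Type*} [Ring S] (R' : Subring S) (I : Set S) : Prop :=
  IsTIof R' I ∧ I ≠ (R' : Set S) ∧
    ∀ A B : Set S, IsTIof R' A → IsTIof R' B →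
      (∀ a ∈ A, ∀ b ∈ B, a * b ∈ I) → A ⊆ I ∨ B ⊆ I

/-
Extend an ideal `A` of `R` to `A·C_S(R)`, the additive subgroup of `S` generated by the products
`a * c` with `a ∈ A` and `c` centralizing `R`. Since `c` commutes with `R`,
`(x c)(y c') = (x y)(c c')` for `x, y ∈ R`; as `S = R·C_S(R)`, this makes `A·C_S(R)` a two-sided
ideal of `S`, and it makes `(A·C_S(R))(B·C_S(R))` lie in `P` as soon as `A B ⊆ P ∩ R`. Primeness
of `P` then puts `A·C_S(R) ⊇ A` or `B·C_S(R) ⊇ B` inside `P`.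
-/

theorem AddSubgroup.mul_mem_of_mem_closure {R : Type*} [NonUnitalNonAssocRing R] {X Y : Set R}
    {P : AddSubgroup R} (h : ∀ x ∈ X, ∀ y ∈ Y, x * y ∈ P) {x y : R}
    (hx : x ∈ AddSubgroup.closure X) (hy : y ∈ AddSubgroup.closure Y) : x * y ∈ P := by
  have hgen : ∀ x ∈ X, AddSubgroup.closure Y ≤ P.comap (AddMonoidHom.mulLeft x) :=
    fun x hx => (AddSubgroup.closure_le _).2 fun y hy => h x hx y hy
  have : AddSubgroup.closure X ≤ P.comap (AddMonoidHom.mulRight y) :=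
    (AddSubgroup.closure_le _).2 fun x hx => hgen x hx hy
  exact this hx

namespace IsTwoSidedIdealSet

variable {S : Type*} [Ring S] {P : Set S}

def toAddSubgroup (hP : IsTwoSidedIdealSet S P) : AddSubgroup S where
  carrier := P
  zero_mem' := hP.zero_mem
  add_mem' := fun ha hb => hP.add_mem ha hb
  neg_mem' := fun ha => hP.neg_mem ha

theorem isTIof_inter (hP : IsTwoSidedIdealSet S P) (R' : Subring S) :
    IsTIof R' (P ∩ (R' : Set S)) := by
  refine ⟨Set.inter_subset_right, ⟨hP.zero_mem, R'.zero_mem⟩, ?_, ?_, ?_⟩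
  · rintro a ⟨haP, haR⟩ b ⟨hbP, hbR⟩
    exact ⟨hP.add_mem haP hbP, R'.add_mem haR hbR⟩
  · rintro a ⟨haP, haR⟩
    exact ⟨hP.neg_mem haP, R'.neg_mem haR⟩
  · rintro r hr a ⟨haP, haR⟩
    exact ⟨⟨hP.mul_mem_left r haP, R'.mul_mem hr haR⟩,
      ⟨hP.mul_mem_right r haP, R'.mul_mem haR hr⟩⟩

theorem inter_ne_of_ne_univ (hP : IsTwoSidedIdealSet S P) (hP_ne : P ≠ Set.univ)
    (R' : Subring S) : P ∩ (R' : Set S) ≠ R' := by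
  intro h
  have hone : (1 : S) ∈ P := (h.symm ▸ one_mem R' : (1 : S) ∈ P ∩ (R' : Set S)).1
  exact hP_ne <| Set.eq_univ_of_forall fun s => mul_one s ▸ hP.mul_mem_left s hone

end IsTwoSidedIdealSet

section MulCentralizer

variable {S : Type*} [Ring S] (R' : Subring S)

def mulCentralizer (A : Set S) : AddSubgroup S :=
  AddSubgroup.closure {x : S | ∃ a ∈ A, ∃ c ∈ Subring.centralizer (R' : Set S), x = a * c}

variable {R'}

theorem subset_mulCentralizer {A : Set S} : A ⊆ mulCentralizer R' A :=
  fun a ha => mul_one a ▸ AddSubgroup.subset_closure ⟨a, ha, 1, one_mem _, rfl⟩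

theorem mul_mem_mulCentralizer {X Y Z : Set S} (hY : Y ⊆ R')
    (hXY : ∀ x ∈ X, ∀ y ∈ Y, x * y ∈ Z) {s t : S} (hs : s ∈ mulCentralizer R' X)
    (ht : t ∈ mulCentralizer R' Y) : s * t ∈ mulCentralizer R' Z := by
  refine AddSubgroup.mul_mem_of_mem_closure ?_ hs ht
  rintro _ ⟨x, hx, c, hc, rfl⟩ _ ⟨y, hy, c', hc', rfl⟩
  have hcy : Commute c y := (Subring.mem_centralizer_iff.mp hc y (hY hy)).symm
  rw [hcy.mul_mul_mul_comm]
  exact AddSubgroup.subset_closure ⟨x * y, hXY x hx y hy, c * c', mul_mem hc hc', rfl⟩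

theorem mulCentralizer_subset {P : Set S} (hP : IsTwoSidedIdealSet S P) :
    (mulCentralizer R' P : Set S) ⊆ P :=
  (AddSubgroup.closure_le hP.toAddSubgroup).2 <| by
    rintro _ ⟨a, ha, c, -, rfl⟩
    exact hP.mul_mem_right c ha

theorem isTwoSidedIdealSet_mulCentralizer (hcen : ∀ s : S, s ∈ mulCentralizer R' R')
    {A : Set S} (hA : IsTIof R' A) : IsTwoSidedIdealSet S (mulCentralizer R' A) where
  zero_mem := zero_mem _
  add_mem := fun _ _ ha hb => add_mem ha hb
  neg_mem := fun _ ha => neg_mem ha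
  mul_mem_left r _ ha :=
    mul_mem_mulCentralizer hA.1 (fun r hr a ha => (hA.2.2.2.2 r hr a ha).1) (hcen r) ha
  mul_mem_right r _ ha :=
    mul_mem_mulCentralizer (fun _ h => h) (fun a ha r hr => (hA.2.2.2.2 r hr a ha).2) ha (hcen r)

end MulCentralizer

/-- let `R ⊆ S` be a centralizing ring extension, i.e.
`S = R·C_S(R)` (every element of `S` is a finite sum of products `r*c` with
`r ∈ R` and `c` centralizing `R`).  Then for every prime two-sided ideal `P` of
`S`, the contraction `P ∩ R` is a prime two-sided ideal of `R`. -/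
theorem contraction_prime_of_centralizing {S : Type*} [Ring S] (R' : Subring S)
    (hcen : ∀ s : S, s ∈ AddSubgroup.closure
      {x : S | ∃ r ∈ R', ∃ c ∈ Subring.centralizer (R' : Set S), x = r * c})
    (P : Set S) (hP : IsPrimeTI S P) :
    IsPrimeTIof R' (P ∩ (R' : Set S)) := by
  obtain ⟨hPI, hP_ne, hP_prime⟩ := hP
  refine ⟨hPI.isTIof_inter R', hPI.inter_ne_of_ne_univ hP_ne R', fun A B hA hB hAB => ?_⟩
  have hprod : ∀ x ∈ (mulCentralizer R' A : Set S), ∀ y ∈ (mulCentralizer R' B : Set S),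
      x * y ∈ P := fun x hx y hy =>
    mulCentralizer_subset hPI <|
      mul_mem_mulCentralizer hB.1 (fun a ha b hb => (hAB a ha b hb).1) hx hy
  rcases hP_prime _ _ (isTwoSidedIdealSet_mulCentralizer hcen hA)
      (isTwoSidedIdealSet_mulCentralizer hcen hB) hprod with hA_le | hB_le
  · exact Or.inl fun a ha => ⟨hA_le (subset_mulCentralizer ha), hA.1 ha⟩
  · exact Or.inr fun b hb => ⟨hB_le (subset_mulCentralizer hb), hB.1 hb⟩
end

section
/- Let R ⊆ S be a centralizing ring extension and let G be a group acting by ring automorphisms on S stabilizing R. If I is a G-prime ideal of S, then I ∩ R is a G-prime ideal of R. -/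
open Pointwise

/-- A `G`-prime ideal of `S`: a proper `G`-stable two-sided ideal `I` such that
`A*B ⊆ I` for `G`-stable two-sided ideals `A, B` implies `A ⊆ I` or `B ⊆ I`. -/
def IsGPrime (G S : Type*) [Group G] [Ring S] [MulSemiringAction G S] (I : Set S) : Prop :=
  IsTwoSidedIdealSet S I ∧ I ≠ Set.univ ∧ (∀ g : G, g • I = I) ∧
    ∀ A B : Set S, IsTwoSidedIdealSet S A → IsTwoSidedIdealSet S B →
      (∀ g : G, g • A = A) → (∀ g : G, g • B = B) →
      (∀ a ∈ A, ∀ b ∈ B, a * b ∈ I) → A ⊆ I ∨ B ⊆ I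

/-- A `G`-prime ideal of the subring `R'` of `S` (for a `G`-action on `S`
stabilizing `R'`). -/
def IsGPrimeOf (G : Type*) {S : Type*} [Group G] [Ring S] [MulSemiringAction G S]
    (R' : Subring S) (I : Set S) : Prop :=
  IsTIof R' I ∧ I ≠ (R' : Set S) ∧ (∀ g : G, g • I = I) ∧
    ∀ A B : Set S, IsTIof R' A → IsTIof R' B →
      (∀ g : G, g • A = A) → (∀ g : G, g • B = B) →
      (∀ a ∈ A, ∀ b ∈ B, a * b ∈ I) → A ⊆ I ∨ B ⊆ I

/-!
A `G`-stable ideal `A` of `R'` generates the `G`-stable ideal `S A S` of `S`. Every `s ∈ S` is a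
sum of terms `r c` with `r ∈ R'` and `c` centralizing `R'`, and `a (r c) b = (a r) b c`; so
`A B ⊆ I` forces `A S B ⊆ I`, hence `(S A S)(S B S) ⊆ I`. Now `G`-primeness of `I` gives
`S A S ⊆ I` or `S B S ⊆ I`, that is `A ⊆ I ∩ R'` or `B ⊆ I ∩ R'`.
-/

/-- `S = R' · C_S(R')`, the product taken additively. -/
def Subring.IsCentralizing {S : Type*} [Ring S] (R' : Subring S) : Prop :=
  ∀ s : S, s ∈ AddSubgroup.closure
    {x : S | ∃ r ∈ R', ∃ c ∈ Subring.centralizer (R' : Set S), x = r * c}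

section IdealSets

variable {S : Type*} [Ring S]

def IsTwoSidedIdealSet.toTwoSidedIdeal {I : Set S} (hI : IsTwoSidedIdealSet S I) :
    TwoSidedIdeal S :=
  .mk' I hI.zero_mem (fun ha hb => hI.add_mem ha hb) (fun ha => hI.neg_mem ha)
    (fun ha => hI.mul_mem_left _ ha) (fun ha => hI.mul_mem_right _ ha)

@[simp]
lemma IsTwoSidedIdealSet.mem_toTwoSidedIdeal {I : Set S} (hI : IsTwoSidedIdealSet S I) {x : S} :
    x ∈ hI.toTwoSidedIdeal ↔ x ∈ I := by
  simp [toTwoSidedIdeal]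

lemma TwoSidedIdeal.isTwoSidedIdealSet (J : TwoSidedIdeal S) : IsTwoSidedIdealSet S J where
  zero_mem := J.zero_mem
  add_mem _ _ := J.add_mem
  neg_mem _ := J.neg_mem
  mul_mem_left r _ := J.mul_mem_left r _
  mul_mem_right r _ := J.mul_mem_right _ r

lemma IsTwoSidedIdealSet.one_notMem {I : Set S} (hI : IsTwoSidedIdealSet S I)
    (hne : I ≠ Set.univ) : (1 : S) ∉ I := fun h1 =>
  hne <| Set.eq_univ_of_forall fun s => by simpa using hI.mul_mem_left s h1

lemma IsTwoSidedIdealSet.isTIof_inter_s4 {I : Set S} (hI : IsTwoSidedIdealSet S I)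
    (R' : Subring S) : IsTIof R' (I ∩ R') :=
  ⟨Set.inter_subset_right, ⟨hI.zero_mem, R'.zero_mem⟩,
    fun _ ha _ hb => ⟨hI.add_mem ha.1 hb.1, R'.add_mem ha.2 hb.2⟩,
    fun _ ha => ⟨hI.neg_mem ha.1, R'.neg_mem ha.2⟩,
    fun r hr _ ha => ⟨⟨hI.mul_mem_left r ha.1, R'.mul_mem hr ha.2⟩,
      ⟨hI.mul_mem_right r ha.1, R'.mul_mem ha.2 hr⟩⟩⟩

end IdealSets

namespace TwoSidedIdeal

variable {S : Type*} [Ring S]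

lemma mul_mul_mem_of_mem_span_right {J : TwoSidedIdeal S} {A B : Set S}
    (h : ∀ a ∈ A, ∀ s, ∀ b ∈ B, a * s * b ∈ J) {a : S} (ha : a ∈ A) {y : S}
    (hy : y ∈ span B) (s : S) : a * s * y ∈ J := by
  induction hy using span_induction generalizing s with
  | mem b hb => exact h a ha s b hb
  | zero => simp
  | add y z _ _ hy hz => rw [mul_add]; exact J.add_mem (hy s) (hz s)
  | neg y _ hy => rw [mul_neg]; exact J.neg_mem (hy s)
  | left_absorb r y _ hy => simpa only [mul_assoc] using hy (s * r)
  | right_absorb r y _ hy => simpa only [mul_assoc] using J.mul_mem_right _ r (hy s)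

lemma mul_mem_of_mem_span {J : TwoSidedIdeal S} {A B : Set S}
    (h : ∀ a ∈ A, ∀ s, ∀ b ∈ B, a * s * b ∈ J) {x y : S}
    (hx : x ∈ span A) (hy : y ∈ span B) : x * y ∈ J := by
  suffices ∀ s, x * s * y ∈ J by simpa using this 1
  induction hx using span_induction with
  | mem a ha => exact mul_mul_mem_of_mem_span_right h ha hy
  | zero => simp
  | add x z _ _ hx hz => intro s; rw [add_mul, add_mul]; exact J.add_mem (hx s) (hz s)
  | neg x _ hx => intro s; rw [neg_mul, neg_mul]; exact J.neg_mem (hx s)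
  | left_absorb r x _ hx => intro s; simpa only [mul_assoc] using J.mul_mem_left r _ (hx s)
  | right_absorb r x _ hx => intro s; simpa only [mul_assoc] using hx (r * s)

lemma smul_span_eq {G : Type*} [Group G] [MulSemiringAction G S] {A : Set S}
    (hA : ∀ g : G, g • A = A) (g : G) : g • (span A : Set S) = span A := by
  have hsub (g : G) : g • (span A : Set S) ⊆ span A := by
    have : span A ≤ comap (MulSemiringAction.toRingHom G S g) (span A) :=
      span_le.2 fun a ha => mem_comap _ |>.2 <| subset_span (hA g ▸ Set.smul_mem_smul_set ha)
    exact Set.smul_set_subset_iff.2 fun x hx => (mem_comap _).1 (this hx)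
  exact subset_antisymm (hsub g) (Set.subset_smul_set_iff.2 (hsub g⁻¹))

end TwoSidedIdeal

lemma Subring.IsCentralizing.mul_mul_mem {S : Type*} [Ring S] {R' : Subring S}
    (hcen : R'.IsCentralizing) {J : TwoSidedIdeal S} {A B : Set S}
    (hA : ∀ a ∈ A, ∀ r ∈ R', a * r ∈ A) (hB : B ⊆ R')
    (hAB : ∀ a ∈ A, ∀ b ∈ B, a * b ∈ J) (a : S) (ha : a ∈ A) (s b : S) (hb : b ∈ B) :
    a * s * b ∈ J := by
  induction hcen s using AddSubgroup.closure_induction with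
  | mem _ hx =>
    obtain ⟨r, hr, c, hc, rfl⟩ := hx
    have hcb : c * b = b * c := (Subring.mem_centralizer_iff.mp hc b (hB hb)).symm
    have : a * (r * c) * b = a * r * b * c := by simp only [mul_assoc, hcb]
    rw [this]
    exact J.mul_mem_right _ c (hAB _ (hA a ha r hr) b hb)
  | zero => simp
  | add x y _ _ hx hy => rw [mul_add, add_mul]; exact J.add_mem hx hy
  | neg x _ hx => rw [mul_neg, neg_mul]; exact J.neg_mem hx

/-- let `R ⊆ S` be a centralizing ring extension and let `G` act by
ring automorphisms on `S` stabilizing `R`.  If `I` is a `G`-prime ideal of `S`,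
then `I ∩ R` is a `G`-prime ideal of `R`. -/
theorem contraction_gPrime_of_centralizing {G S : Type*} [Group G] [Ring S]
    [MulSemiringAction G S] (R' : Subring S)
    (hcen : ∀ s : S, s ∈ AddSubgroup.closure
      {x : S | ∃ r ∈ R', ∃ c ∈ Subring.centralizer (R' : Set S), x = r * c})
    (hstab : ∀ g : G, g • (R' : Set S) = (R' : Set S))
    (I : Set S) (hI : IsGPrime G S I) :
    IsGPrimeOf G R' (I ∩ (R' : Set S)) := by
  obtain ⟨hIi, hIne, hIst, hIpr⟩ := hI
  refine ⟨hIi.isTIof_inter_s4 R', fun h => hIi.one_notMem hIne (h.ge R'.one_mem).1,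
    fun g => by rw [Set.smul_set_inter, hIst g, hstab g], ?_⟩
  intro A B hA hB hAst hBst hAB
  have hspan : ∀ x ∈ TwoSidedIdeal.span A, ∀ y ∈ TwoSidedIdeal.span B, x * y ∈ I :=
    fun x hx y hy => hIi.mem_toTwoSidedIdeal.1 <| TwoSidedIdeal.mul_mem_of_mem_span
      (Subring.IsCentralizing.mul_mul_mem hcen (fun a ha r hr => (hA.2.2.2.2 r hr a ha).2) hB.1
        fun a ha b hb => hIi.mem_toTwoSidedIdeal.2 (hAB a ha b hb).1) hx hy
  refine (hIpr _ _ (TwoSidedIdeal.isTwoSidedIdealSet _) (TwoSidedIdeal.isTwoSidedIdealSet _)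
    (TwoSidedIdeal.smul_span_eq hAst) (TwoSidedIdeal.smul_span_eq hBst) hspan).imp ?_ ?_
  · exact fun h => Set.subset_inter (TwoSidedIdeal.subset_span.trans h) hA.1
  · exact fun h => Set.subset_inter (TwoSidedIdeal.subset_span.trans h) hB.1
end
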